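/- Let (Ω, F, V, T) be an upper probability preserving system such that V(A) ∈ {0, 1} for every A ∈ I. Then for every A ∈ I with V(A) = 1 there exists A' ∈ I with A' ⊆ A and V(A') = 1 such that for every B ∈ I with B ⊆ A' and V(B) = 1 one has V(A' ∖ B) = 0. -/

import Mathlib

/-!
If no such `A'` existed, every invariant `C ⊆ A` of capacity one would split into two invariant
pieces of capacity one (the 0-1 law turns `V (C \ B) ≠ 0` into `V (C \ B) = 1`). Splitting off
one piece after the other yields infinitely many pairwise disjoint sets of capacity one, while
continuity of `V` at `∅`, applied to their tails `⋃ k ≥ n, D k ↓ ∅`, forces their capacities to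
tend to `0`.
-/

open MeasureTheory Set Filter Topology ENNReal NNReal

variable {Ω : Type*}

/-- The core of a set function `V` : all countably additive probability measures dominated
by `V` on measurable sets. -/
def UpperCore [MeasurableSpace Ω] (V : Set Ω → ℝ) : Set (Measure Ω) :=
  {P | IsProbabilityMeasure P ∧ ∀ A : Set Ω, MeasurableSet A → (P A).toReal ≤ V A}

/-- `V` is an upper probability: monotone, normalized, attained as the sup over its core,
and continuous at `∅` along decreasing sequences. -/
def IsUpperProb [MeasurableSpace Ω] (V : Set Ω → ℝ) : Prop :=
  (∀ A B : Set Ω, MeasurableSet A → MeasurableSet B → A ⊆ B → V A ≤ V B) ∧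
  V (∅ : Set Ω) = 0 ∧ V (univ : Set Ω) = 1 ∧
  (∀ A : Set Ω, MeasurableSet A →
    V A = sSup ((fun P : Measure Ω => (P A).toReal) '' UpperCore V)) ∧
  (∀ A : ℕ → Set Ω, (∀ n, MeasurableSet (A n)) → (∀ n, A (n + 1) ⊆ A n) →
    (⋂ n, A n) = ∅ → Tendsto (fun n => V (A n)) atTop (𝓝 0))

/-- A `T`-invariant measurable set. -/
def InvSet [MeasurableSpace Ω] (T : Ω → Ω) (A : Set Ω) : Prop :=
  MeasurableSet A ∧ T ⁻¹' A = A

/-- A `T`-invariant probability measure (an element of `M(T)`). -/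
def InvProb [MeasurableSpace Ω] (T : Ω → Ω) (P : Measure Ω) : Prop :=
  IsProbabilityMeasure P ∧ ∀ A : Set Ω, MeasurableSet A → P (T ⁻¹' A) = P A

/-- An ergodic `T`-invariant probability measure (an element of `M^e(T)`). -/
def ErgProb [MeasurableSpace Ω] (T : Ω → Ω) (P : Measure Ω) : Prop :=
  InvProb T P ∧ ∀ A : Set Ω, InvSet T A → P A = 0 ∨ P A = 1

/-- The set function `V_i(A) = sup {P(A) : P ∈ core(V), P(Ai) = 1}`
(the sup over the empty set being `0`). -/
noncomputable def CompV [MeasurableSpace Ω] (V : Set Ω → ℝ) (Ai : Set Ω) :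
    Set Ω → ℝ :=
  fun A => sSup ((fun P : Measure Ω => (P A).toReal) '' {P ∈ UpperCore V | P Ai = 1})

/-- `V` is of finite ergodic components with respect to `T`. -/
def IsFEC [MeasurableSpace Ω] (V : Set Ω → ℝ) (T : Ω → Ω) : Prop :=
  ∃ (n : ℕ) (A : Fin n → Set Ω),
    (∀ i, InvSet T (A i)) ∧
    (univ : Set Ω) = ⋃ i, A i ∧
    (∀ i j, i ≠ j → Disjoint (A i) (A j)) ∧
    ∀ i, IsUpperProb (CompV V (A i)) ∧
      ∀ B : Set Ω, InvSet T B → CompV V (A i) B = 0 ∨ CompV V (A i) Bᶜ = 0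

/-- `Q` is an extreme point of the set `S` of measures. -/
def IsExtremePt [MeasurableSpace Ω] (S : Set (Measure Ω)) (Q : Measure Ω) : Prop :=
  Q ∈ S ∧ ∀ P₁ ∈ S, ∀ P₂ ∈ S, ∀ a : ℝ≥0∞, 0 < a → a < 1 →
    Q = a • P₁ + (1 - a) • P₂ → P₁ = Q ∧ P₂ = Q

open Function

theorem InvSet.diff [MeasurableSpace Ω] {T : Ω → Ω} {A B : Set Ω}
    (hA : InvSet T A) (hB : InvSet T B) : InvSet T (A \ B) :=
  ⟨hA.1.diff hB.1, by rw [preimage_sdiff, hA.2, hB.2]⟩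

theorem exists_pairwise_disjoint_of_forall_split {p : Set Ω → Prop}
    (split : ∀ C, p C → ∃ B ⊆ C, p B ∧ p (C \ B)) {A : Set Ω} (hA : p A) :
    ∃ D : ℕ → Set Ω, (∀ n, p (D n)) ∧ Pairwise (Disjoint on D) := by
  choose! B hBsub hB hdiff using split
  let C : ℕ → Set Ω := fun n => Nat.rec A (fun _ Cn => Cn \ B Cn) n
  have hC : ∀ n, p (C n) := fun n => by
    induction n with
    | zero => exact hA
    | succ n ih => exact hdiff _ ih
  have hC_anti : Antitone C := antitone_nat_of_succ_le fun _ => sdiff_subset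
  refine ⟨fun n => B (C n), fun n => hB _ (hC n), ?_⟩
  suffices h : ∀ n m, n < m → Disjoint (B (C n)) (B (C m)) from
    fun n m hnm => hnm.lt_or_gt.elim (h n m) fun hmn => (h m n hmn).symm
  intro n m hnm
  have hm : B (C m) ⊆ C n \ B (C n) := (hBsub _ (hC m)).trans (hC_anti (Nat.succ_le_of_lt hnm))
  exact Disjoint.mono_right hm disjoint_sdiff_right

theorem IsUpperProb.nonneg [MeasurableSpace Ω] {V : Set Ω → ℝ} (hV : IsUpperProb V)
    {A : Set Ω} (hA : MeasurableSet A) : 0 ≤ V A :=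
  hV.2.1 ▸ hV.1 ∅ A MeasurableSet.empty hA (empty_subset A)

theorem IsUpperProb.tendsto_zero_of_pairwise_disjoint [MeasurableSpace Ω] {V : Set Ω → ℝ}
    (hV : IsUpperProb V) {D : ℕ → Set Ω} (hD : ∀ n, MeasurableSet (D n))
    (hdisj : Pairwise (Disjoint on D)) : Tendsto (fun n => V (D n)) atTop (𝓝 0) := by
  let R : ℕ → Set Ω := fun n => ⋃ k ≥ n, D k
  have hR : ∀ n, MeasurableSet (R n) := fun n => .biUnion (to_countable _) fun k _ => hD k
  have hR_empty : ⋂ n, R n = ∅ := by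
    refine eq_empty_of_forall_notMem fun x hx => ?_
    obtain ⟨k, -, hxk⟩ := mem_iUnion₂.1 (mem_iInter.1 hx 0)
    obtain ⟨l, hkl, hxl⟩ := mem_iUnion₂.1 (mem_iInter.1 hx (k + 1))
    exact disjoint_left.1 (hdisj (by omega : k ≠ l)) hxk hxl
  have hR_anti : ∀ n, R (n + 1) ⊆ R n :=
    fun n => biUnion_mono (fun k hk => (Nat.le_succ n).trans hk) fun _ _ => subset_rfl
  refine tendsto_of_tendsto_of_tendsto_of_le_of_le tendsto_const_nhds
    (hV.2.2.2.2 R hR hR_anti hR_empty) (fun n => hV.nonneg (hD n)) fun n => ?_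
  exact hV.1 _ _ (hD n) (hR n) (subset_biUnion_of_mem (le_refl n))

theorem stmt_4_general [MeasurableSpace Ω] (V : Set Ω → ℝ) (T : Ω → Ω)
    (hV : IsUpperProb V)
    (h01 : ∀ A : Set Ω, InvSet T A → V A = 0 ∨ V A = 1) :
    ∀ A : Set Ω, InvSet T A → V A = 1 →
      ∃ A' : Set Ω, InvSet T A' ∧ A' ⊆ A ∧ V A' = 1 ∧
        ∀ B : Set Ω, InvSet T B → B ⊆ A' → V B = 1 → V (A' \ B) = 0 := by
  intro A hA hVA
  by_contra! hcon
  let Full : Set Ω → Prop := fun C => InvSet T C ∧ C ⊆ A ∧ V C = 1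
  have hsplit : ∀ C, Full C → ∃ B ⊆ C, Full B ∧ Full (C \ B) := by
    rintro C ⟨hC, hCA, hVC⟩
    obtain ⟨B, hB, hBC, hVB, hVCB⟩ := hcon C hC hCA hVC
    exact ⟨B, hBC, ⟨hB, hBC.trans hCA, hVB⟩,
      ⟨hC.diff hB, sdiff_subset.trans hCA, (h01 _ (hC.diff hB)).resolve_left hVCB⟩⟩
  obtain ⟨D, hD, hdisj⟩ :=
    exists_pairwise_disjoint_of_forall_split hsplit (show Full A from ⟨hA, subset_rfl, hVA⟩)
  have hlim := hV.tendsto_zero_of_pairwise_disjoint (fun n => (hD n).1.1) hdisj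
  simp only [fun n => (hD n).2.2, tendsto_const_nhds_iff] at hlim
  exact one_ne_zero hlim

/-- If `V(A) ∈ {0,1}` for every invariant set `A`, then every invariant set of
full capacity contains a "minimal" invariant subset of full capacity. -/
theorem stmt_4 [MeasurableSpace Ω] (V : Set Ω → ℝ) (T : Ω → Ω)
    (hV : IsUpperProb V) (hT : Measurable T)
    (hVinv : ∀ A : Set Ω, MeasurableSet A → V (T ⁻¹' A) = V A)
    (h01 : ∀ A : Set Ω, InvSet T A → V A = 0 ∨ V A = 1) :
    ∀ A : Set Ω, InvSet T A → V A = 1 →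
      ∃ A' : Set Ω, InvSet T A' ∧ A' ⊆ A ∧ V A' = 1 ∧
        ∀ B : Set Ω, InvSet T B → B ⊆ A' → V B = 1 → V (A' \ B) = 0 :=
  stmt_4_general V T hV h01
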